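/- arXiv:2406.10064 — 2 statements merged into one kernel-verified Lean document; each statement's English description precedes it below -/
import Mathlib

section
/- Let L be an n-dimensional non-abelian Lie algebra over a finite field F_q. Then d(L) = 5/8 if and only if q = 2 and L is isomorphic to either H(1) ⊕ A(n−3) or ⟨x, y | [x, y] = x⟩ ⊕ A(n−2) over F₂, where H(1) is the 3-dimensional Heisenberg Lie algebra with basis {x, y, z} and only nonzero bracket [x, y] = z, ⟨x, y | [x, y] = x⟩ is the 2-dimensional non-abelian Lie algebra, and A(k) denotes the abelian Lie algebra of dimension k. -/
/-- The commutativity degree of a finite Lie ring `L`: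
the probability that two randomly chosen elements commute. -/
noncomputable def commDeg (L : Type*) [LieRing L] : ℚ :=
  (Nat.card {p : L × L // ⁅p.1, p.2⁆ = 0} : ℚ) / (Nat.card L : ℚ) ^ 2

/-- `L` is isomorphic to `H(1) ⊕ A(k)`, the direct sum of the 3-dimensional Heisenberg Lie
algebra (basis `{x, y, z}`, only nonzero bracket `⁅x, y⁆ = z`) and the `k`-dimensional abelian
Lie algebra: i.e. `L` admits a basis `x, y, z, a₁, …, a_k` with `⁅x, y⁆ = z` and all other
brackets among basis elements (besides `⁅y, x⁆ = -z`) equal to zero. -/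
def IsHeisenbergSumAbelian (F : Type*) [Field F] (L : Type*) [LieRing L] [LieAlgebra F L]
    (k : ℕ) : Prop :=
  ∃ b : Module.Basis (Unit ⊕ Unit ⊕ Unit ⊕ Fin k) F L,
    ⁅b (Sum.inl ()), b (Sum.inr (Sum.inl ()))⁆ = b (Sum.inr (Sum.inr (Sum.inl ()))) ∧
    ∀ i j : Unit ⊕ Unit ⊕ Unit ⊕ Fin k,
      ¬(i = Sum.inl () ∧ j = Sum.inr (Sum.inl ())) →
      ¬(i = Sum.inr (Sum.inl ()) ∧ j = Sum.inl ()) →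
      ⁅b i, b j⁆ = 0

/-- `L` is isomorphic to `⟨x, y ∣ ⁅x, y⁆ = x⟩ ⊕ A(k)`, the direct sum of the 2-dimensional
non-abelian Lie algebra and the `k`-dimensional abelian Lie algebra: i.e. `L` admits a basis
`x, y, a₁, …, a_k` with `⁅x, y⁆ = x` and all other brackets among basis elements
(besides `⁅y, x⁆ = -x`) equal to zero. -/
def IsNonAbelian2DimSumAbelian (F : Type*) [Field F] (L : Type*) [LieRing L] [LieAlgebra F L]
    (k : ℕ) : Prop :=
  ∃ b : Module.Basis (Unit ⊕ Unit ⊕ Fin k) F L,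
    ⁅b (Sum.inl ()), b (Sum.inr (Sum.inl ()))⁆ = b (Sum.inl ()) ∧
    ∀ i j : Unit ⊕ Unit ⊕ Fin k,
      ¬(i = Sum.inl () ∧ j = Sum.inr (Sum.inl ())) →
      ¬(i = Sum.inr (Sum.inl ()) ∧ j = Sum.inl ()) →
      ⁅b i, b j⁆ = 0

/-!
Write `Z` for the centre of `L`, `k = dim L/Z` and `q = |F|`. Counting commuting pairs `(x, y)`
row by row, a central `x` contributes `|L|` and a non-central `x` contributes
`|ker ad x| ≤ |L|/q`, so `q·d(L) ≤ 1 + (q - 1)/q^k`. When `k = 2` this is an equality, because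
`Z < ker ad x < L` forces `ker ad x` to be a hyperplane. A non-abelian `L` has `k ≥ 2`, and
`5q/8 ≤ 1 + (q - 1)/q^k` only holds for `q = k = 2`; hence `d(L) = 5/8` iff `q = 2` and `k = 2`.

It remains to see that `k = 2` describes exactly the two algebras of the statement. If
`[x, y] ≠ 0`, then `x, y` span `L` modulo `Z`, so every bracket is a multiple of `w = [x, y]`.
If `w` is central, `x, y` and a basis of `Z` through `w` form a Heisenberg basis; otherwise
`[w, v] = w` for some `v`, and `w, v` with a basis of `Z` give the second shape.
-/

open Module LieAlgebra

section LinearAlgebra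

variable {K V : Type*} [DivisionRing K] [AddCommGroup V] [Module K V] [FiniteDimensional K V]

theorem Module.Basis.exists_sumElim_of_linearIndependent_mkQ {W : Submodule K V} {ι κ : Type*}
    [Fintype ι] [Fintype κ] (bW : Basis ι K W) {g : κ → V}
    (hg : LinearIndependent K (W.mkQ ∘ g)) (hcard : Fintype.card κ = finrank K (V ⧸ W)) :
    ∃ b : Basis (κ ⊕ ι) K V, ⇑b = Sum.elim g (fun i => (bW i : V)) := by
  have hli := (bW.linearIndependent.sumElim_of_quotient g hg).comp Sum.swap
    (Function.LeftInverse.injective Sum.swap_swap)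
  rw [Sum.elim_swap] at hli
  have hcard' : Fintype.card (κ ⊕ ι) = finrank K V := by
    rw [Fintype.card_sum, hcard, ← finrank_eq_card_basis bW,
      Submodule.finrank_quotient_add_finrank]
  exact ⟨_, coe_basisOfLinearIndependentOfCardEqFinrank' _ hli hcard'⟩

theorem Module.Basis.exists_extend_pair_of_finrank_quotient_eq_two {W : Submodule K V} {ι : Type*}
    [Fintype ι] (bW : Basis ι K W) {x y : V} (hxy : LinearIndependent K ![W.mkQ x, W.mkQ y])
    (h2 : finrank K (V ⧸ W) = 2) :
    ∃ b : Basis (Unit ⊕ Unit ⊕ ι) K V, b (Sum.inl ()) = x ∧ b (Sum.inr (Sum.inl ())) = y ∧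
      ∀ i, b (Sum.inr (Sum.inr i)) = bW i := by
  have hg : LinearIndependent K (W.mkQ ∘ Sum.elim (fun _ : Unit => x) (fun _ : Unit => y)) := by
    convert hxy.comp (Sum.elim (fun _ => 0) (fun _ => 1) : Unit ⊕ Unit → Fin 2) (by decide) using 1
    ext (_ | _) <;> rfl
  obtain ⟨b, hb⟩ := bW.exists_sumElim_of_linearIndependent_mkQ hg (by simp [h2])
  refine ⟨b.reindex (Equiv.sumAssoc _ _ _), ?_⟩
  simp [hb]

theorem Module.Basis.exists_apply_inl_eq_of_ne_zero {v : V} (hv : v ≠ 0) :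
    ∃ b : Basis (Unit ⊕ Fin (finrank K V - 1)) K V, b (Sum.inl ()) = v := by
  classical
  have hli : LinearIndependent K (fun _ : Unit => v) := linearIndependent_unique_iff.mpr hv
  let b := Basis.sumExtend hli
  have : Finite (Basis.sumExtendIndex hli) :=
    (Module.Finite.finite_basis b).of_injective _ Sum.inr_injective
  have : Fintype (Basis.sumExtendIndex hli) := Fintype.ofFinite _
  have hcard := (finrank_eq_card_basis b).symm
  rw [Fintype.card_sum, Fintype.card_unit] at hcard
  refine ⟨b.reindex (Equiv.sumCongr (Equiv.refl _) (Fintype.equivFinOfCardEq (by omega))), ?_⟩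
  simp only [b, Basis.sumExtend, Basis.reindex_apply, Basis.coe_extend]
  rfl

theorem Module.Basis.finrank_quotient_le_card {W : Submodule K V} {ι : Type*} [Fintype ι]
    (b : Basis ι K V) (s : Finset ι) (hb : ∀ i ∉ s, b i ∈ W) :
    finrank K (V ⧸ W) ≤ s.card := by
  classical
  have hli : LinearIndependent K (fun i : {i // i ∉ s} => (⟨b i, hb i i.2⟩ : W)) :=
    LinearIndependent.of_comp W.subtype (b.linearIndependent.comp _ Subtype.val_injective)
  have := hli.fintype_card_le_finrank
  have := finrank_eq_card_basis b
  have := Submodule.finrank_quotient_add_finrank W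
  simp only [Fintype.card_subtype_compl, Fintype.card_coe] at *
  omega

end LinearAlgebra

namespace LieAlgebra

variable {F L : Type*} [Field F] [LieRing L] [LieAlgebra F L]

local notation "𝔷" => LieSubmodule.toSubmodule (LieAlgebra.center F L)

theorem mem_center_iff_ad_eq_zero {x : L} : x ∈ center F L ↔ ad F L x = 0 := by
  simp only [LieModule.mem_maxTrivSubmodule, LinearMap.ext_iff, ad_apply, LinearMap.zero_apply,
    ← lie_skew x, neg_eq_zero]

theorem ker_ad_eq_top_iff {x : L} : LinearMap.ker (ad F L x) = ⊤ ↔ x ∈ center F L :=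
  LinearMap.ker_eq_top.trans mem_center_iff_ad_eq_zero.symm

theorem center_lt_ker_ad {x : L} (hx : x ∉ center F L) : 𝔷 < LinearMap.ker (ad F L x) := by
  refine SetLike.lt_iff_le_and_exists.mpr ⟨fun z hz => ?_, x, lie_self x, hx⟩
  rw [LinearMap.mem_ker, ad_apply]
  exact (LieModule.mem_maxTrivSubmodule ..).mp hz x

theorem mem_center_of_lie_basis_eq_zero {ι : Type*} (b : Module.Basis ι F L) {x : L}
    (h : ∀ i, ⁅x, b i⁆ = 0) : x ∈ center F L :=
  mem_center_iff_ad_eq_zero.mpr (b.ext h)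

theorem lie_eq_lie_of_sub_mem_center {u u' v v' : L} (hu : u - u' ∈ center F L)
    (hv : v - v' ∈ center F L) : ⁅u, v⁆ = ⁅u', v'⁆ := by
  rw [LieModule.mem_maxTrivSubmodule] at hu hv
  have hu' : ⁅u - u', v⁆ = 0 := by rw [← lie_skew, hu, neg_zero]
  rw [← sub_eq_zero, ← sub_add_sub_cancel _ ⁅u', v⁆, ← sub_lie, ← lie_sub, hu', hv, add_zero]

theorem linearIndependent_mkQ_center {x y : L} (hxy : ⁅x, y⁆ ≠ 0) :
    LinearIndependent F ![Submodule.mkQ 𝔷 x, Submodule.mkQ 𝔷 y] := by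
  rw [LinearIndependent.pair_iff]
  intro s t hst
  rw [← map_smul, ← map_smul, ← map_add, Submodule.mkQ_apply, Submodule.Quotient.mk_eq_zero,
    LieSubmodule.mem_toSubmodule, LieModule.mem_maxTrivSubmodule] at hst
  have hs := hst y
  have ht := hst x
  simp only [lie_add, lie_smul, lie_self, smul_zero, zero_add, add_zero, ← lie_skew y x,
    smul_neg, neg_eq_zero, smul_eq_zero, hxy, or_false] at hs ht
  exact ⟨hs, ht⟩

theorem exists_lie_ne_zero (hna : ¬IsLieAbelian L) : ∃ x y : L, ⁅x, y⁆ ≠ 0 := by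
  by_contra! h
  exact hna ⟨h⟩

theorem lie_eq_zero_of_tail_mem_center {ι : Type*} {b : Unit ⊕ Unit ⊕ ι → L}
    (hb : ∀ i, b (Sum.inr (Sum.inr i)) ∈ center F L) (i j : Unit ⊕ Unit ⊕ ι)
    (h₁ : ¬(i = Sum.inl () ∧ j = Sum.inr (Sum.inl ())))
    (h₂ : ¬(i = Sum.inr (Sum.inl ()) ∧ j = Sum.inl ())) : ⁅b i, b j⁆ = 0 := by
  have hl : ∀ i (x : L), ⁅x, b (Sum.inr (Sum.inr i))⁆ = 0 := fun i =>
    (LieModule.mem_maxTrivSubmodule ..).mp (hb i)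
  have hr : ∀ i (x : L), ⁅b (Sum.inr (Sum.inr i)), x⁆ = 0 := fun i x => by
    rw [← lie_skew, hl, neg_zero]
  rcases i with ⟨⟩ | ⟨⟩ | i <;> rcases j with ⟨⟩ | ⟨⟩ | j <;> simp_all

section FiniteDimensional

variable [FiniteDimensional F L]

theorem two_le_finrank_quotient_center (hna : ¬IsLieAbelian L) :
    2 ≤ finrank F (L ⧸ 𝔷) := by
  obtain ⟨x, y, hxy⟩ := exists_lie_ne_zero hna
  simpa using (linearIndependent_mkQ_center (F := F) hxy).fintype_card_le_finrank

theorem exists_sub_mem_center (h2 : finrank F (L ⧸ 𝔷) = 2) {x y : L} (hxy : ⁅x, y⁆ ≠ 0)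
    (u : L) : ∃ a b : F, u - (a • x + b • y) ∈ center F L := by
  have hspan := (linearIndependent_mkQ_center (F := F) hxy).span_eq_top_of_card_eq_finrank'
    (by simp [h2])
  rw [Matrix.range_cons_cons_empty] at hspan
  obtain ⟨a, b, hab⟩ :=
    Submodule.mem_span_pair.mp (hspan ▸ Submodule.mem_top (x := Submodule.mkQ 𝔷 u))
  refine ⟨a, b, ?_⟩
  rw [← LieSubmodule.mem_toSubmodule, ← Submodule.Quotient.mk_eq_zero, ← Submodule.mkQ_apply,
    map_sub, map_add, map_smul, map_smul, hab, sub_self]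

theorem exists_lie_eq_smul_lie (h2 : finrank F (L ⧸ 𝔷) = 2) {x y : L} (hxy : ⁅x, y⁆ ≠ 0)
    (u v : L) : ∃ c : F, ⁅u, v⁆ = c • ⁅x, y⁆ := by
  obtain ⟨a, b, hu⟩ := exists_sub_mem_center h2 hxy u
  obtain ⟨c, d, hv⟩ := exists_sub_mem_center h2 hxy v
  refine ⟨a * d - b * c, ?_⟩
  rw [lie_eq_lie_of_sub_mem_center hu hv]
  simp only [add_lie, lie_add, smul_lie, lie_smul, lie_self, smul_zero, add_zero, zero_add,
    ← lie_skew y x, smul_neg, smul_smul]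
  module

theorem exists_lie_eq_self (h2 : finrank F (L ⧸ 𝔷) = 2) {x y : L} (hxy : ⁅x, y⁆ ≠ 0)
    (hw : ⁅x, y⁆ ∉ center F L) : ∃ v, ⁅⁅x, y⁆, v⁆ = ⁅x, y⁆ := by
  rw [LieModule.mem_maxTrivSubmodule] at hw
  push Not at hw
  obtain ⟨u, hu⟩ := hw
  obtain ⟨c, hc⟩ := exists_lie_eq_smul_lie (F := F) h2 hxy u ⁅x, y⁆
  have hc0 : c ≠ 0 := by rintro rfl; exact hu (hc.trans (zero_smul F _))
  refine ⟨-(c⁻¹ • u), ?_⟩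
  rw [lie_neg, lie_smul, ← smul_neg, lie_skew, hc, smul_smul, inv_mul_cancel₀ hc0,
    one_smul]

theorem isHeisenbergSumAbelian_or_isNonAbelian2DimSumAbelian (hna : ¬IsLieAbelian L)
    (h2 : finrank F (L ⧸ 𝔷) = 2) :
    IsHeisenbergSumAbelian F L (finrank F L - 3) ∨
      IsNonAbelian2DimSumAbelian F L (finrank F L - 2) := by
  have hn := Submodule.finrank_quotient_add_finrank 𝔷
  obtain ⟨x, y, hxy⟩ := exists_lie_ne_zero hna
  by_cases hw : ⁅x, y⁆ ∈ center F L
  · left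
    obtain ⟨bZ, hbZ⟩ := Module.Basis.exists_apply_inl_eq_of_ne_zero (K := F)
      (v := (⟨⁅x, y⁆, hw⟩ : 𝔷)) (by simpa using hxy)
    obtain ⟨b, hx, hy, hZ⟩ := bZ.exists_extend_pair_of_finrank_quotient_eq_two
      (linearIndependent_mkQ_center hxy) h2
    rw [show finrank F L - 3 = finrank F 𝔷 - 1 by omega]
    exact ⟨b, by rw [hx, hy, hZ, hbZ], lie_eq_zero_of_tail_mem_center fun i => hZ i ▸ (bZ i).2⟩
  · right
    obtain ⟨v, hv⟩ := exists_lie_eq_self h2 hxy hw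
    obtain ⟨b, hx, hy, hZ⟩ := (Module.finBasis F 𝔷).exists_extend_pair_of_finrank_quotient_eq_two
      (linearIndependent_mkQ_center (hv.symm ▸ hxy)) h2
    rw [show finrank F L - 2 = finrank F 𝔷 by omega]
    exact ⟨b, by rw [hx, hy, hv], lie_eq_zero_of_tail_mem_center fun i => hZ i ▸ (finBasis F 𝔷 i).2⟩

theorem finrank_quotient_center_le_two {ι : Type*} [Fintype ι]
    (b : Module.Basis (Unit ⊕ Unit ⊕ ι) F L)
    (hb : ∀ i j, ¬(i = Sum.inl () ∧ j = Sum.inr (Sum.inl ())) →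
      ¬(i = Sum.inr (Sum.inl ()) ∧ j = Sum.inl ()) → ⁅b i, b j⁆ = 0) :
    finrank F (L ⧸ 𝔷) ≤ 2 := by
  classical
  refine (b.finrank_quotient_le_card {.inl (), .inr (.inl ())} fun i hi => ?_).trans
    Finset.card_le_two
  exact mem_center_of_lie_basis_eq_zero b fun j => hb i j (by simp_all) (by simp_all)

theorem finrank_quotient_center_eq_two_iff (hna : ¬IsLieAbelian L) :
    finrank F (L ⧸ 𝔷) = 2 ↔
      IsHeisenbergSumAbelian F L (finrank F L - 3) ∨
        IsNonAbelian2DimSumAbelian F L (finrank F L - 2) := by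
  refine ⟨isHeisenbergSumAbelian_or_isNonAbelian2DimSumAbelian hna, ?_⟩
  rintro (⟨b, -, hb⟩ | ⟨b, -, hb⟩) <;>
    exact (finrank_quotient_center_le_two b hb).antisymm (two_le_finrank_quotient_center hna)

theorem finrank_ker_ad_lt {x : L} (hx : x ∉ center F L) :
    finrank F (LinearMap.ker (ad F L x)) < finrank F L :=
  Submodule.finrank_lt (ker_ad_eq_top_iff.not.mpr hx)

theorem finrank_ker_ad_add_one (h2 : finrank F (L ⧸ 𝔷) = 2) {x : L} (hx : x ∉ center F L) :
    finrank F (LinearMap.ker (ad F L x)) + 1 = finrank F L := by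
  have := finrank_ker_ad_lt hx
  have := Submodule.finrank_lt_finrank_of_lt (center_lt_ker_ad hx)
  have := Submodule.finrank_quotient_add_finrank 𝔷
  omega

end FiniteDimensional

section Counting

variable [Finite L]

theorem commDeg_eq_sum_natCard_ker_ad [Fintype L] :
    commDeg L = (∑ x : L, (Nat.card (LinearMap.ker (ad F L x)) : ℚ)) / Nat.card L ^ 2 := by
  rw [commDeg, Nat.card_congr (Equiv.subtypeProdEquivSigmaSubtype fun x y : L => ⁅x, y⁆ = 0),
    Nat.card_sigma]
  push_cast
  rfl

theorem natCard_ker_ad_mul_eq (h2 : finrank F (L ⧸ 𝔷) = 2) {x : L} (hx : x ∉ center F L) :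
    Nat.card (LinearMap.ker (ad F L x)) * Nat.card F = Nat.card L := by
  rw [natCard_eq_pow_finrank (K := F), natCard_eq_pow_finrank (K := F) (V := L), ← pow_succ,
    finrank_ker_ad_add_one h2 hx]

variable [Finite F]

theorem natCard_ker_ad_mul_le {x : L} (hx : x ∉ center F L) :
    Nat.card (LinearMap.ker (ad F L x)) * Nat.card F ≤ Nat.card L := by
  rw [natCard_eq_pow_finrank (K := F), natCard_eq_pow_finrank (K := F) (V := L), ← pow_succ]
  exact Nat.pow_le_pow_right Finite.card_pos (finrank_ker_ad_lt hx)

open Classical in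
theorem sum_add_ite_mem_center [Fintype L] :
    ∑ x : L,
        ((Nat.card L : ℚ) + if x ∈ center F L then ((Nat.card F : ℚ) - 1) * Nat.card L else 0) =
      (1 + (Nat.card F - 1) / Nat.card F ^ finrank F (L ⧸ 𝔷)) * Nat.card L ^ 2 := by
  rw [Finset.sum_add_distrib, Finset.sum_ite, Finset.sum_const_zero, add_zero,
    Finset.sum_const, Finset.sum_const, Finset.card_univ, ← Nat.card_eq_fintype_card]
  have hZ : (Finset.univ.filter (· ∈ center F L)).card = Nat.card 𝔷 := by
    rw [← Fintype.card_subtype, ← Nat.card_eq_fintype_card]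
    rfl
  have hL : (Nat.card L : ℚ) = Nat.card F ^ finrank F (L ⧸ 𝔷) * Nat.card 𝔷 := by
    rw [natCard_eq_pow_finrank (K := F), natCard_eq_pow_finrank (K := F) (V := 𝔷),
      ← Submodule.finrank_quotient_add_finrank 𝔷, pow_add]
    push_cast
    ring
  rw [hZ, nsmul_eq_mul, nsmul_eq_mul, hL]
  have : (Nat.card F : ℚ) ≠ 0 := by exact_mod_cast Finite.card_pos.ne'
  field_simp

theorem commDeg_mul_le :
    commDeg L * Nat.card F ≤ 1 + (Nat.card F - 1) / Nat.card F ^ finrank F (L ⧸ 𝔷) := by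
  have := Fintype.ofFinite L
  have hL : (0 : ℚ) < Nat.card L ^ 2 := by have : 0 < Nat.card L := Nat.card_pos; positivity
  rw [commDeg_eq_sum_natCard_ker_ad (F := F), div_mul_eq_mul_div, Finset.sum_mul,
    div_le_iff₀ hL, ← sum_add_ite_mem_center]
  refine Finset.sum_le_sum fun x _ => ?_
  split_ifs with hx
  · rw [ker_ad_eq_top_iff.mpr hx, Nat.card_congr Submodule.topEquiv.toEquiv]
    linarith
  · rw [add_zero]
    exact_mod_cast natCard_ker_ad_mul_le hx

theorem commDeg_mul_eq (h2 : finrank F (L ⧸ 𝔷) = 2) :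
    commDeg L * Nat.card F = 1 + (Nat.card F - 1) / Nat.card F ^ 2 := by
  have := Fintype.ofFinite L
  have hL : (Nat.card L : ℚ) ^ 2 ≠ 0 := by have : 0 < Nat.card L := Nat.card_pos; positivity
  have hsum := sum_add_ite_mem_center (F := F) (L := L)
  rw [h2] at hsum
  rw [commDeg_eq_sum_natCard_ker_ad (F := F), div_mul_eq_mul_div, Finset.sum_mul,
    div_eq_iff hL, ← hsum]
  refine Finset.sum_congr rfl fun x _ => ?_
  split_ifs with hx
  · rw [ker_ad_eq_top_iff.mpr hx, Nat.card_congr Submodule.topEquiv.toEquiv]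
    ring
  · rw [add_zero]
    exact_mod_cast natCard_ker_ad_mul_eq h2 hx

end Counting

end LieAlgebra

theorem eq_two_and_eq_two_of_five_eighths_mul_le {q k : ℕ} (hq : 2 ≤ q) (hk : 2 ≤ k)
    (h : 5 / 8 * (q : ℚ) ≤ 1 + (q - 1) / q ^ k) : q = 2 ∧ k = 2 := by
  have hq' : (2 : ℚ) ≤ q := by exact_mod_cast hq
  have hqk : 5 / 8 * (q : ℚ) ≤ 1 + (q - 1) / q ^ 2 :=
    h.trans (by gcongr; exacts [by linarith, by linarith])
  obtain rfl : q = 2 := by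
    by_contra hne
    have h3 : (3 : ℚ) ≤ q := by exact_mod_cast (show 3 ≤ q by omega)
    rw [add_div' _ _ _ (by positivity), le_div_iff₀ (by positivity)] at hqk
    nlinarith
  refine ⟨rfl, le_antisymm ?_ hk⟩
  have h4 : (2 : ℚ) ^ k ≤ 2 ^ 2 := by
    rw [← sub_le_iff_le_add', le_div_iff₀ (by positivity)] at h
    norm_num at h
    linarith
  exact_mod_cast (pow_le_pow_iff_right₀ (by norm_num : (1 : ℚ) < 2)).mp h4

/-- If `L` is an `n`-dimensional non-abelian Lie algebra over a finite field
`F_q`, then `d(L) = 5/8` if and only if `q = 2` and `L` is isomorphic to `H(1) ⊕ A(n−3)` or to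
`⟨x, y ∣ ⁅x, y⁆ = x⟩ ⊕ A(n−2)` over `F₂`. -/
theorem commDeg_eq_five_eighths_iff
    (F : Type*) [Field F] [Fintype F]
    (n : ℕ) (L : Type*) [LieRing L] [LieAlgebra F L] [Finite L]
    (hn : Module.finrank F L = n)
    (hna : ¬IsLieAbelian L) :
    commDeg L = 5 / 8 ↔
      Fintype.card F = 2 ∧
        (IsHeisenbergSumAbelian F L (n - 3) ∨ IsNonAbelian2DimSumAbelian F L (n - 2)) := by
  subst hn
  rw [← finrank_quotient_center_eq_two_iff hna, ← Nat.card_eq_fintype_card]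
  constructor
  · intro h
    have hle := commDeg_mul_le (F := F) (L := L)
    rw [h] at hle
    exact eq_two_and_eq_two_of_five_eighths_mul_le Finite.one_lt_card
      (two_le_finrank_quotient_center hna) hle
  · rintro ⟨hq, h2⟩
    have := commDeg_mul_eq h2
    rw [hq] at this
    linarith
end

section
/- Let L be a finite-dimensional Lie algebra over the finite field F_q and let M, N be ideals of L with N ⊆ M. Then d(L/N) ≤ d(L/M). -/
open Function

theorem AddMonoidHom.card_preimage_of_surjective {G H : Type*} [AddGroup G] [AddGroup H]
    (f : G →+ H) (hf : Surjective f) (t : Set H) :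
    Nat.card (f ⁻¹' t) = Nat.card f.ker * Nat.card t := by
  let e := QuotientAddGroup.quotientKerEquivOfSurjective f hf
  have hpre : f ⁻¹' t = QuotientAddGroup.mk ⁻¹' (e ⁻¹' t) := rfl
  rw [hpre, Nat.card_congr (QuotientAddGroup.preimageMkEquivAddSubgroupProdSet _ _),
    Nat.card_prod, Nat.card_preimage_of_injective e.injective (by simp [e.surjective.range_eq])]

def commutingPairs (L : Type*) [LieRing L] : Set (L × L) := {p | ⁅p.1, p.2⁆ = 0}

theorem commDeg_eq_card_commutingPairs_div (L : Type*) [LieRing L] :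
    commDeg L = Nat.card (commutingPairs L) / Nat.card (L × L) := by
  rw [commDeg, Nat.card_prod, Nat.cast_mul, sq]
  rfl

theorem commDeg_le_of_surjective {A B : Type*} [LieRing A] [LieRing B] [Finite A]
    (f : A →+ B) (hf : Surjective f) (hbr : ∀ x y, f ⁅x, y⁆ = ⁅f x, f y⁆) :
    commDeg A ≤ commDeg B := by
  let g := f.prodMap f
  have hg : Surjective g := hf.prodMap hf
  have hsub : commutingPairs A ⊆ g ⁻¹' commutingPairs B := fun p (hp : ⁅p.1, p.2⁆ = 0) =>
    show ⁅f p.1, f p.2⁆ = 0 by rw [← hbr, hp, map_zero]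
  have hcomm : Nat.card (commutingPairs A) ≤ Nat.card g.ker * Nat.card (commutingPairs B) :=
    g.card_preimage_of_surjective hg _ ▸ Nat.card_mono (Set.toFinite _) hsub
  have hcard : Nat.card (A × A) = Nat.card g.ker * Nat.card (B × B) := by
    simpa using g.card_preimage_of_surjective hg Set.univ
  have hker : (Nat.card g.ker : ℚ) ≠ 0 := Nat.cast_ne_zero.mpr Nat.card_pos.ne'
  calc commDeg A
      = Nat.card (commutingPairs A) / (Nat.card g.ker * Nat.card (B × B)) := by
        rw [commDeg_eq_card_commutingPairs_div, hcard, Nat.cast_mul]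
    _ ≤ Nat.card g.ker * Nat.card (commutingPairs B) / (Nat.card g.ker * Nat.card (B × B)) := by
        gcongr
        exact_mod_cast hcomm
    _ = commDeg B := by rw [mul_div_mul_left _ _ hker, commDeg_eq_card_commutingPairs_div]

theorem commDeg_quotient_le_quotient_general
    (F : Type*) [Field F]
    (L : Type*) [LieRing L] [LieAlgebra F L] [Finite L]
    (M N : LieIdeal F L) (hNM : N ≤ M) :
    commDeg (L ⧸ N) ≤ commDeg (L ⧸ M) := by
  have : Finite (L ⧸ N) := Quotient.finite _
  refine commDeg_le_of_surjective (Submodule.factor hNM).toAddMonoidHom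
    (Submodule.factor_surjective hNM) ?_
  rintro ⟨x⟩ ⟨y⟩
  exact LieSubmodule.Quotient.mk_bracket M x y

/-- If `L` is a finite-dimensional Lie algebra over the finite field `F_q`
and `M`, `N` are ideals of `L` with `N ⊆ M`, then `d(L/N) ≤ d(L/M)`. -/
theorem commDeg_quotient_le_quotient
    (F : Type*) [Field F] [Fintype F]
    (L : Type*) [LieRing L] [LieAlgebra F L] [Finite L]
    (M N : LieIdeal F L) (hNM : N ≤ M) :
    commDeg (L ⧸ N) ≤ commDeg (L ⧸ M) :=
  commDeg_quotient_le_quotient_general F L M N hNM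
end
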